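/- arXiv:2203.11982 — 5 statements merged into one kernel-verified Lean document; each statement's English description precedes it below -/
import Mathlib

section
/- Let 𝔞 ⊆ ℂ be an R-submodule of ℂ (an additive subgroup satisfying R·𝔞 ⊆ 𝔞). Then 𝔞 ⊆ R (i.e. 𝔞 is an integral ideal of R) if and only if every element a ∈ 𝔞 has imaginary part lying in α_R·ℤ, i.e. for every a ∈ 𝔞 there is n ∈ ℤ with Im(a) = n·α_R. -/
/-!
Since `𝓞 K = ℤ[ω]` and `ω` has a monic minimal polynomial of degree at most `2`, `R = ℤ + ℤ z` with
`z = τ ω`, and `z² ∈ R`. Elements of `R` clearly have imaginary part in `ℤ · Im z`. Conversely,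
if `Im a = n Im z` and `Im (z a) = m Im z`, then `a - n z` is real, and comparing imaginary
parts of `z a = z (a - n z) + n z²` shows that `a - n z` is an integer.
-/

open NumberField Polynomial Submodule

section QuadraticGenerator

variable {R S : Type*} [CommRing R] [Ring S] [Algebra R S] {x : S} {p : R[X]}

theorem aeval_mem_span_one_self_of_monic (hp : p.Monic) (hdeg : p.natDegree ≤ 2)
    (hx : aeval x p = 0) (P : R[X]) : aeval x P ∈ span R {1, x} := by
  nontriviality S
  have := (algebraMap R S).domain_nontrivial
  have hmod : (P %ₘ p).degree ≤ 1 :=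
    Order.le_of_lt_succ <| (degree_modByMonic_lt P hp).trans_le <|
      (degree_le_of_natDegree_le hdeg).trans_eq rfl
  rw [← aeval_modByMonic_eq_self_of_root hx, eq_X_add_C_of_degree_le_one hmod]
  exact mem_span_pair.2 ⟨(P %ₘ p).coeff 0, (P %ₘ p).coeff 1, by simp [Algebra.smul_def, add_comm]⟩

theorem span_one_self_eq_top_of_adjoin_eq_top (hp : p.Monic) (hdeg : p.natDegree ≤ 2)
    (hx : aeval x p = 0) (hadj : Algebra.adjoin R {x} = ⊤) : span R {1, x} = ⊤ := by
  refine eq_top_iff.2 fun y _ => ?_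
  obtain ⟨P, rfl⟩ : y ∈ Set.range (aeval x : R[X] → S) := by
    rw [← AlgHom.coe_range, ← Algebra.adjoin_singleton_eq_range_aeval, hadj]
    exact Algebra.mem_top
  exact aeval_mem_span_one_self_of_monic hp hdeg hx P

end QuadraticGenerator

theorem RingHom.range_eq_span_one_of_span_eq_top {S T : Type*} [Ring S] [Ring T] (φ : S →+* T)
    {ω : S} (hω : span ℤ {1, ω} = ⊤) : Set.range φ = span ℤ {1, φ ω} := by
  have h := map_span φ.toAddMonoidHom.toIntLinearMap {1, ω}
  rw [hω, Submodule.map_top, Set.image_pair] at h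
  simpa using congrArg SetLike.coe h

namespace Complex

theorem exists_im_eq_intCast_mul_of_mem_span {z x : ℂ} (hx : x ∈ span ℤ {1, z}) :
    ∃ n : ℤ, x.im = n * z.im := by
  obtain ⟨m, n, rfl⟩ := mem_span_pair.1 hx
  exact ⟨n, by simp⟩

theorem mem_span_one_self_of_im {z a : ℂ} (hz : z.im ≠ 0) (hsq : z ^ 2 ∈ span ℤ {1, z}) {n m : ℤ}
    (ha : a.im = n * z.im) (hza : (z * a).im = m * z.im) : a ∈ span ℤ {1, z} := by
  obtain ⟨c, d, hcd⟩ := mem_span_pair.1 hsq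
  have hre : 2 * z.re = d := by
    have := congrArg im hcd
    simp only [zsmul_eq_mul, mul_one, add_im, intCast_im, mul_im, intCast_re, zero_mul, add_zero,
      zero_add, pow_two] at this
    exact mul_right_cancel₀ hz (by linarith)
  have hare : a.re = m - n * z.re := by
    simp only [mul_im, ha] at hza
    exact mul_right_cancel₀ hz (by linarith)
  refine mem_span_pair.2 ⟨m - n * d, n, ext ?_ ?_⟩
  · simp only [zsmul_eq_mul, Int.cast_sub, Int.cast_mul, mul_one, add_re, sub_re, intCast_re,
      mul_re, intCast_im, mul_zero, sub_zero, zero_mul, hare, ← hre]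
    ring
  · simp [ha]

theorem coe_subset_span_one_self_iff {z : ℂ} (hz : z.im ≠ 0) (hsq : z ^ 2 ∈ span ℤ {1, z})
    (A : AddSubgroup ℂ) (hA : ∀ a ∈ A, z * a ∈ A) :
    (A : Set ℂ) ⊆ span ℤ {1, z} ↔ ∀ a ∈ A, ∃ n : ℤ, a.im = n * z.im := by
  refine ⟨fun h a ha => exists_im_eq_intCast_mul_of_mem_span (h ha), fun h a ha => ?_⟩
  obtain ⟨n, hn⟩ := h a ha
  obtain ⟨m, hm⟩ := h (z * a) (hA a ha)
  exact mem_span_one_self_of_im hz hsq hn hm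

end Complex

theorem stmt_0_general
    (K : Type*) [Field K] [NumberField K]
    (hdeg : Module.finrank ℚ K = 2)
    (τ : K →+* ℂ)
    (R : Set ℂ) (hR : R = Set.range fun a : 𝓞 K => τ (algebraMap (𝓞 K) K a))
    (ω : 𝓞 K) (hω : Algebra.adjoin ℤ ({ω} : Set (𝓞 K)) = ⊤)
    (αR : ℝ) (hα : αR = (τ (algebraMap (𝓞 K) K ω)).im) (hαpos : 0 < αR)
    (A : AddSubgroup ℂ)
    (hmod : ∀ r ∈ R, ∀ a ∈ A, r * a ∈ A) :
    (A : Set ℂ) ⊆ R ↔ ∀ a ∈ A, ∃ n : ℤ, a.im = n * αR := by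
  have hint : IsIntegral ℤ ω := .of_finite ℤ ω
  have hspan : span ℤ {1, ω} = ⊤ :=
    span_one_self_eq_top_of_adjoin_eq_top (minpoly.monic hint)
      (hdeg ▸ RingOfIntegers.rank K ▸ minpoly.natDegree_le ω) (minpoly.aeval ℤ ω) hω
  set φ := τ.comp (algebraMap (𝓞 K) K)
  have hRφ : R = span ℤ {1, φ ω} := hR.trans (φ.range_eq_span_one_of_span_eq_top hspan)
  have hωR : φ ω ∈ R := hR ▸ ⟨ω, rfl⟩
  have hω2R : φ ω ^ 2 ∈ R := hR ▸ ⟨ω ^ 2, map_pow φ ω 2⟩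
  subst hα
  rw [hRφ] at hω2R ⊢
  exact Complex.coe_subset_span_one_self_iff hαpos.ne' hω2R A fun a ha => hmod _ hωR a ha

/-- Let `K` be an imaginary quadratic field, `τ : K →+* ℂ` an embedding,
`R = τ(𝓞 K)`, `ω` a generator of `𝓞 K` over `ℤ` with `Im τ(ω) > 0`, and `α_R = Im τ(ω)`.
If `A` is an `R`-submodule of `ℂ`, then `A ⊆ R` iff every element of `A` has imaginary part
in `α_R · ℤ`. -/
theorem stmt_0
    (K : Type*) [Field K] [NumberField K]
    (hdeg : Module.finrank ℚ K = 2)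
    (hcplx : IsEmpty (K →+* ℝ))
    (τ : K →+* ℂ)
    (R : Set ℂ) (hR : R = Set.range fun a : 𝓞 K => τ (algebraMap (𝓞 K) K a))
    (ω : 𝓞 K) (hω : Algebra.adjoin ℤ ({ω} : Set (𝓞 K)) = ⊤)
    (αR : ℝ) (hα : αR = (τ (algebraMap (𝓞 K) K ω)).im) (hαpos : 0 < αR)
    (A : AddSubgroup ℂ)
    (hmod : ∀ r ∈ R, ∀ a ∈ A, r * a ∈ A) :
    (A : Set ℂ) ⊆ R ↔ ∀ a ∈ A, ∃ n : ℤ, a.im = n * αR :=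
  stmt_0_general K hdeg τ R hR ω hω αR hα hαpos A hmod
end

section
/- Let Γ ⊆ ℂ^g be an R-submodule of ℂ^g (under coordinatewise multiplication by elements of R) which is a ℤ-lattice in ℂ^g ≅ ℝ^{2g} (discrete and spanning over ℝ). Let h : ℂ^g × ℂ^g → ℂ be a positive definite hermitian form (ℂ-linear in the first variable, conjugate-linear in the second, h(w,v) = conj(h(v,w)), and h(v,v) > 0 for v ≠ 0) such that Im h(γ,γ') ∈ ℤ for all γ, γ' ∈ Γ. Then: (i) α_R·h(γ,γ') ∈ R for all γ, γ' ∈ Γ; and (ii) {v ∈ ℂ^g : Im h(v,γ) ∈ ℤ for all γ ∈ Γ} = {v ∈ ℂ^g : α_R·h(v,γ) ∈ R for all γ ∈ Γ}. -/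
open NumberField Polynomial

/- Writing `ρ = τ ω` and `α = Im ρ`, every complex `z` satisfies `α z = (Im z) ρ - Im (ρ̄ z)`.
For `z = h(v, γ)` we have `ρ̄ z = h(v, ρ γ)` with `ρ γ ∈ Γ`, so integrality of `Im h(v, ·)` on `Γ`
makes `α h(v, γ)` an element `m ρ - n` of `R`. Conversely, since `[K : ℚ] = 2`, every element of
`R = ℤ[ρ]` is `p + q ρ` with `p, q ∈ ℤ`; comparing imaginary parts of `α z = p + q ρ` gives
`Im z = q`. -/

theorem Algebra.exists_eq_algebraMap_add_algebraMap_mul_of_adjoin_eq_top {R A : Type*}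
    [CommRing R] [Nontrivial R] [CommRing A] [Algebra R A] {ω : A} {f : R[X]} (hf : f.Monic)
    (hdeg : f.natDegree ≤ 2) (hroot : aeval ω f = 0) (hω : Algebra.adjoin R {ω} = ⊤) (x : A) :
    ∃ p q : R, x = algebraMap R A p + algebraMap R A q * ω := by
  obtain ⟨P, rfl⟩ : ∃ P : R[X], aeval ω P = x := by
    rw [← AlgHom.mem_range, ← Algebra.adjoin_singleton_eq_range_aeval, hω]; trivial
  have hlt : (P %ₘ f).degree < 2 :=
    (degree_modByMonic_lt P hf).trans_le (degree_le_of_natDegree_le hdeg)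
  refine ⟨(P %ₘ f).coeff 0, (P %ₘ f).coeff 1, ?_⟩
  rw [← aeval_modByMonic_eq_self_of_root hroot,
    eq_X_add_C_of_degree_le_one (Order.le_of_lt_succ hlt)]
  simp [add_comm]

theorem NumberField.RingOfIntegers.exists_eq_intCast_add_intCast_mul {K : Type*} [Field K]
    [NumberField K] (hdeg : Module.finrank ℚ K = 2) {ω : 𝓞 K}
    (hω : Algebra.adjoin ℤ ({ω} : Set (𝓞 K)) = ⊤) (x : 𝓞 K) :
    ∃ p q : ℤ, x = p + q * ω := by
  have hminpoly : (minpoly ℤ ω).natDegree ≤ 2 := by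
    rw [← hdeg, ← RingOfIntegers.rank]
    exact minpoly.natDegree_le ω
  simpa using Algebra.exists_eq_algebraMap_add_algebraMap_mul_of_adjoin_eq_top
    (minpoly.monic (RingOfIntegers.isIntegral ω)) hminpoly (minpoly.aeval ℤ ω) hω x

theorem Complex.ofReal_im_mul_eq (ρ z : ℂ) :
    (ρ.im : ℂ) * z = z.im * ρ - (starRingEnd ℂ ρ * z).im := by
  apply Complex.ext <;> simp <;> ring

theorem apply_smul_eq_conj_mul {E : Type*} [AddCommGroup E] [Module ℂ E] (f : E → ℂ)
    (hf : ∀ (c : ℂ) (w w' : E), f (c • w + w') = starRingEnd ℂ c * f w + f w') (c : ℂ) (w : E) :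
    f (c • w) = starRingEnd ℂ c * f w := by
  have hzero : f 0 = 0 := by simpa using hf 1 0 0
  simpa [hzero] using hf c w 0

theorem stmt_6_general
    (K : Type*) [Field K] [NumberField K]
    (hdeg : Module.finrank ℚ K = 2)
    (τ : K →+* ℂ)
    (R : Set ℂ) (hR : R = Set.range fun a : 𝓞 K => τ (algebraMap (𝓞 K) K a))
    (ω : 𝓞 K) (hω : Algebra.adjoin ℤ ({ω} : Set (𝓞 K)) = ⊤)
    (αR : ℝ) (hα : αR = (τ (algebraMap (𝓞 K) K ω)).im) (hαpos : 0 < αR)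
    (g : ℕ)
    (Γ : AddSubgroup (Fin g → ℂ))
    (hmod : ∀ r ∈ R, ∀ γ ∈ Γ, (fun i => r * γ i) ∈ Γ)
    (h : (Fin g → ℂ) → (Fin g → ℂ) → ℂ)
    (hlin₂ : ∀ (c : ℂ) (v w w' : Fin g → ℂ),
      h v (c • w + w') = starRingEnd ℂ c * h v w + h v w')
    (hint : ∀ γ ∈ Γ, ∀ γ' ∈ Γ, ∃ n : ℤ, (h γ γ').im = n) :
    (∀ γ ∈ Γ, ∀ γ' ∈ Γ, (αR : ℂ) * h γ γ' ∈ R) ∧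
    {v : Fin g → ℂ | ∀ γ ∈ Γ, ∃ n : ℤ, (h v γ).im = n} =
      {v : Fin g → ℂ | ∀ γ ∈ Γ, (αR : ℂ) * h v γ ∈ R} := by
  subst hR hα
  set ρ : ℂ := τ (algebraMap (𝓞 K) K ω)
  have hτ (p q : ℤ) : τ (algebraMap (𝓞 K) K (p + q * ω)) = p + q * ρ := by simp [ρ]
  have mem_of_im_mem (v : Fin g → ℂ) (hv : ∀ γ ∈ Γ, ∃ n : ℤ, (h v γ).im = n) (γ : Fin g → ℂ)
      (hγ : γ ∈ Γ) : (ρ.im : ℂ) * h v γ ∈ Set.range fun a : 𝓞 K => τ (algebraMap (𝓞 K) K a) := by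
    obtain ⟨m, hm⟩ := hv γ hγ
    obtain ⟨n, hn⟩ := hv (ρ • γ) (hmod ρ ⟨ω, rfl⟩ γ hγ)
    refine ⟨(-n : ℤ) + m * ω, ?_⟩
    rw [apply_smul_eq_conj_mul (h v) (hlin₂ · v)] at hn
    dsimp only
    rw [hτ, Complex.ofReal_im_mul_eq, hm, hn]
    push_cast
    ring
  refine ⟨fun γ hγ γ' hγ' => mem_of_im_mem γ (hint γ hγ) γ' hγ',
    Set.ext fun v => ⟨mem_of_im_mem v, fun hv γ hγ => ?_⟩⟩
  obtain ⟨x, hx⟩ := hv γ hγ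
  obtain ⟨p, q, rfl⟩ := RingOfIntegers.exists_eq_intCast_add_intCast_mul hdeg hω x
  have him := congrArg Complex.im hx
  simp only [hτ, Complex.add_im, Complex.intCast_im, Complex.mul_im, Complex.intCast_re,
    Complex.ofReal_re, Complex.ofReal_im] at him
  exact ⟨q, mul_left_cancel₀ hαpos.ne' (by linarith)⟩

/-- Let `Γ ⊆ ℂ^g` be an `R`-submodule (coordinatewise multiplication,
`R = τ(𝓞 K)`) which is a `ℤ`-lattice, and let `h` be a positive definite hermitian form with
`Im h(γ, γ') ∈ ℤ` on `Γ`.  Then (i) `α_R · h(γ, γ') ∈ R` for all `γ, γ' ∈ Γ`, and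
(ii) the dual lattice conditions `Im h(v, γ) ∈ ℤ` and `α_R · h(v, γ) ∈ R` agree. -/
theorem stmt_6
    (K : Type*) [Field K] [NumberField K]
    (hdeg : Module.finrank ℚ K = 2)
    (hcplx : IsEmpty (K →+* ℝ))
    (τ : K →+* ℂ)
    (R : Set ℂ) (hR : R = Set.range fun a : 𝓞 K => τ (algebraMap (𝓞 K) K a))
    (ω : 𝓞 K) (hω : Algebra.adjoin ℤ ({ω} : Set (𝓞 K)) = ⊤)
    (αR : ℝ) (hα : αR = (τ (algebraMap (𝓞 K) K ω)).im) (hαpos : 0 < αR)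
    (g : ℕ)
    (Γ : AddSubgroup (Fin g → ℂ))
    (hmod : ∀ r ∈ R, ∀ γ ∈ Γ, (fun i => r * γ i) ∈ Γ)
    (hdisc : DiscreteTopology Γ)
    (hspan : Submodule.span ℝ (Γ : Set (Fin g → ℂ)) = ⊤)
    (h : (Fin g → ℂ) → (Fin g → ℂ) → ℂ)
    (hlin₁ : ∀ (c : ℂ) (v v' w : Fin g → ℂ), h (c • v + v') w = c * h v w + h v' w)
    (hlin₂ : ∀ (c : ℂ) (v w w' : Fin g → ℂ),
      h v (c • w + w') = starRingEnd ℂ c * h v w + h v w')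
    (hsymm : ∀ v w, h w v = starRingEnd ℂ (h v w))
    (hpos : ∀ v, v ≠ 0 → 0 < (h v v).re)
    (hint : ∀ γ ∈ Γ, ∀ γ' ∈ Γ, ∃ n : ℤ, (h γ γ').im = n) :
    (∀ γ ∈ Γ, ∀ γ' ∈ Γ, (αR : ℂ) * h γ γ' ∈ R) ∧
    {v : Fin g → ℂ | ∀ γ ∈ Γ, ∃ n : ℤ, (h v γ).im = n} =
      {v : Fin g → ℂ | ∀ γ ∈ Γ, (αR : ℂ) * h v γ ∈ R} :=
  stmt_6_general K hdeg τ R hR ω hω αR hα hαpos g Γ hmod h hlin₂ hint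
end

section
/- Let 𝔞₁, …, 𝔞_g be nonzero fractional ideals of 𝓞_K and let Γ = {v ∈ ℂ^g : vᵢ ∈ τ(𝔞ᵢ) for all i}. Then for every w ∈ ℂ^g the following are equivalent: (a) Im(∑ᵢ γᵢ·conj(wᵢ)) ∈ ℤ for every γ ∈ Γ; (b) α_R·conj(wᵢ) ∈ τ(𝔞ᵢ⁻¹) for every i, where 𝔞ᵢ⁻¹ is the inverse fractional ideal of 𝔞ᵢ. (This computes the dual lattice of Γ for the standard hermitian pairing.) -/
open NumberField Polynomial


lemma aux_deg2 (K : Type*) [Field K] [NumberField K]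
    (hdeg : Module.finrank ℚ K = 2) (τ : K →+* ℂ) (ω : 𝓞 K)
    (him : (τ (algebraMap (𝓞 K) K ω)).im ≠ 0) :
    (minpoly ℤ ω).natDegree = 2 := by
  set w0 : K := algebraMap (𝓞 K) K ω with hw0
  have hint : IsIntegral ℤ ω := Algebra.IsIntegral.isIntegral ω
  have heq : minpoly ℚ w0 = (minpoly ℤ ω).map (algebraMap ℤ ℚ) :=
    minpoly.isIntegrallyClosed_eq_field_fractions ℚ K hint
  have hnd : (minpoly ℚ w0).natDegree = (minpoly ℤ ω).natDegree := by
    rw [heq]; exact natDegree_map_eq_of_injective (algebraMap ℤ ℚ).injective_int _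
  have hintQ : IsIntegral ℚ w0 := IsIntegral.of_finite ℚ w0
  have hle : (minpoly ℚ w0).natDegree ≤ 2 := hdeg ▸ minpoly.natDegree_le w0
  have hne1 : (minpoly ℚ w0).degree ≠ 1 := by
    intro h1
    obtain ⟨q, hq⟩ := (minpoly.degree_eq_one_iff).mp h1
    apply him
    rw [← hq, show algebraMap ℚ K q = (q : K) from rfl, map_ratCast]
    simp
  have hpos : 0 < (minpoly ℚ w0).natDegree := minpoly.natDegree_pos hintQ
  have : (minpoly ℚ w0).natDegree ≠ 1 := by
    intro h
    apply hne1
    rw [degree_eq_natDegree (minpoly.ne_zero hintQ), h]; rfl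
  omega


-- relation: ω^2 = -c*ω - d  where c,d are minpoly coeffs
lemma aux_rel (K : Type*) [Field K] [NumberField K] (ω : 𝓞 K)
    (h2 : (minpoly ℤ ω).natDegree = 2) :
    ω ^ 2 + ((minpoly ℤ ω).coeff 1 : 𝓞 K) * ω + ((minpoly ℤ ω).coeff 0 : 𝓞 K) = 0 := by
  have hint : IsIntegral ℤ ω := Algebra.IsIntegral.isIntegral ω
  have hmon : (minpoly ℤ ω).Monic := minpoly.monic hint
  have h0 : Polynomial.aeval ω (minpoly ℤ ω) = 0 := minpoly.aeval ℤ ω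
  have hc2 : (minpoly ℤ ω).coeff 2 = 1 := by
    have := hmon.coeff_natDegree
    rwa [h2] at this
  rw [aeval_eq_sum_range, h2] at h0
  simp only [Finset.sum_range_succ, Finset.sum_range_zero, hc2, zsmul_eq_mul, zero_add,
    one_mul, pow_zero, pow_one, mul_one] at h0
  linear_combination h0

-- decomposition in 𝓞 K
lemma aux_int_decomp (K : Type*) [Field K] [NumberField K] (ω : 𝓞 K)
    (hω : Algebra.adjoin ℤ ({ω} : Set (𝓞 K)) = ⊤)
    (h2 : (minpoly ℤ ω).natDegree = 2) (y : 𝓞 K) :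
    ∃ m n : ℤ, y = (m : 𝓞 K) + (n : 𝓞 K) * ω := by
  have hint : IsIntegral ℤ ω := Algebra.IsIntegral.isIntegral ω
  have hmon : (minpoly ℤ ω).Monic := minpoly.monic hint
  have hy : y ∈ Algebra.adjoin ℤ ({ω} : Set (𝓞 K)) := hω ▸ Algebra.mem_top
  rw [Algebra.adjoin_singleton_eq_range_aeval] at hy
  obtain ⟨P, hP⟩ := hy
  set r := P %ₘ minpoly ℤ ω with hr
  have hdegr : r.degree < (minpoly ℤ ω).degree := degree_modByMonic_lt P hmon
  have hdeg2 : (minpoly ℤ ω).degree = 2 := by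
    rw [degree_eq_natDegree (hmon.ne_zero), h2]; rfl
  have hdr1 : r.degree ≤ 1 := by
    rw [hdeg2] at hdegr
    exact Order.le_of_lt_succ (by exact_mod_cast hdegr)
  have hrX : r = C (r.coeff 1) * X + C (r.coeff 0) := eq_X_add_C_of_degree_le_one hdr1
  have haev : Polynomial.aeval ω r = y := by
    conv_rhs => rw [← hP]
    rw [hr]
    conv_rhs => rw [← modByMonic_add_div P (minpoly ℤ ω)]
    simp [minpoly.aeval]
  refine ⟨r.coeff 0, r.coeff 1, ?_⟩
  rw [← haev]
  conv_lhs => rw [hrX]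
  simp
  ring


lemma aux_rat_decomp (K : Type*) [Field K] [NumberField K]
    (hdeg : Module.finrank ℚ K = 2) (τ : K →+* ℂ) (w0 : K)
    (him : (τ w0).im ≠ 0) (x : K) :
    ∃ m n : ℚ, x = (m : K) + (n : K) * w0 := by
  have hτq : ∀ q : ℚ, τ (q : K) = (q : ℂ) := fun q => map_ratCast τ q
  have hli : LinearIndependent ℚ ![(1 : K), w0] := by
    rw [LinearIndependent.pair_iff]
    intro s t hst
    have h0 : τ (s • (1:K) + t • w0) = 0 := by rw [hst, map_zero]
    have : (s : ℂ) + (t : ℂ) * τ w0 = 0 := by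
      simpa [Rat.smul_def, hτq, map_add, map_mul] using h0
    have him' : (s:ℝ) + (t:ℝ) * (τ w0).re = 0 ∧ (t:ℝ) * (τ w0).im = 0 := by
      constructor
      · simpa using congrArg Complex.re this
      · simpa using congrArg Complex.im this
    have ht : (t:ℝ) = 0 := by
      rcases mul_eq_zero.mp him'.2 with h | h
      · exact h
      · exact absurd h him
    have hs : (s:ℝ) = 0 := by
      have := him'.1
      rw [ht] at this; simpa using this
    exact ⟨by exact_mod_cast hs, by exact_mod_cast ht⟩
  have hcard : Fintype.card (Fin 2) = Module.finrank ℚ K := by simp [hdeg]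
  let B := basisOfLinearIndependentOfCardEqFinrank hli hcard
  have hB : ∀ i, B i = ![(1:K), w0] i := fun i => by
    simp [B, coe_basisOfLinearIndependentOfCardEqFinrank]
  refine ⟨B.repr x 0, B.repr x 1, ?_⟩
  have := B.sum_repr x
  rw [Fin.sum_univ_two, hB 0, hB 1] at this
  simp only [Matrix.cons_val_zero, Matrix.cons_val_one, Matrix.head_cons] at this
  rw [Rat.smul_def, Rat.smul_def] at this
  linear_combination -this


section pt
variable (K : Type*) [Field K] [NumberField K]
  (hdeg : Module.finrank ℚ K = 2) (τ : K →+* ℂ)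
  (ω : 𝓞 K) (hω : Algebra.adjoin ℤ ({ω} : Set (𝓞 K)) = ⊤)
  (αR : ℝ) (hα : αR = (τ (algebraMap (𝓞 K) K ω)).im) (hαpos : 0 < αR)

set_option maxHeartbeats 1000000 in
include hdeg hω hα hαpos in
lemma aux_point
    (𝔞 : FractionalIdeal (nonZeroDivisors (𝓞 K)) K) (h𝔞 : 𝔞 ≠ 0) (z : ℂ) :
    (∀ a ∈ 𝔞, ∃ n : ℤ, (τ a * z).im = n) ↔ ∃ b ∈ 𝔞⁻¹, (αR : ℂ) * z = τ b := by
  set w0 : K := algebraMap (𝓞 K) K ω with hw0def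
  set wc : ℂ := τ w0 with hwcdef
  set s : ℝ := wc.re with hsdef
  have hαim : wc.im = αR := hα.symm
  have hαne : αR ≠ 0 := ne_of_gt hαpos
  set c : ℤ := (minpoly ℤ ω).coeff 1 with hcdef
  set d : ℤ := (minpoly ℤ ω).coeff 0 with hddef
  have himne : (τ (algebraMap (𝓞 K) K ω)).im ≠ 0 := by rw [← hα]; exact hαne
  have h2 : (minpoly ℤ ω).natDegree = 2 := aux_deg2 K hdeg τ ω himne
  have hrelO : ω ^ 2 + (c : 𝓞 K) * ω + (d : 𝓞 K) = 0 := aux_rel K ω h2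
  have hrelK : w0 ^ 2 + (c : K) * w0 + (d : K) = 0 := by
    have := congrArg (algebraMap (𝓞 K) K) hrelO
    push_cast at this ⊢
    simpa [map_add, map_mul, map_pow, map_intCast] using this
  have hrelC : wc ^ 2 + (c : ℂ) * wc + (d : ℂ) = 0 := by
    have := congrArg τ hrelK
    simpa [map_add, map_mul, map_pow, map_intCast] using this
  have hc2s : (c : ℝ) = -2 * s := by
    have him := congrArg Complex.im hrelC
    simp only [Complex.add_im, Complex.mul_im, Complex.intCast_im, Complex.intCast_re,
      Complex.zero_im, pow_two] at him
    rw [hαim] at him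
    have : αR * (2 * s + (c:ℝ)) = 0 := by linarith [him]
    rcases mul_eq_zero.mp this with h | h
    · exact absurd h hαne
    · linarith [h]
  -- τ on rational decompositions
  have hτdecC : ∀ m n : ℚ, τ ((m : K) + (n : K) * w0) = (m : ℂ) + (n : ℂ) * wc := by
    intro m n; simp [map_add, map_mul, map_ratCast, hwcdef]
  have hτdecIm : ∀ m n : ℚ, (τ ((m : K) + (n : K) * w0)).im = (n : ℝ) * αR := by
    intro m n; rw [hτdecC]; simp [hαim]
  have hτdecCZ : ∀ m n : ℤ, τ ((m : K) + (n : K) * w0) = (m : ℂ) + (n : ℂ) * wc := by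
    intro m n
    have := hτdecC (m : ℚ) (n : ℚ)
    push_cast at this ⊢
    exact this
  have hτdecImZ : ∀ m n : ℤ, (τ ((m : K) + (n : K) * w0)).im = (n : ℝ) * αR := by
    intro m n; rw [hτdecCZ]; simp [hαim]
  -- membership in (1 : FractionalIdeal) characterization
  have hone : ∀ x : K, x ∈ (1 : FractionalIdeal (nonZeroDivisors (𝓞 K)) K) ↔
      ∃ m n : ℤ, x = (m : K) + (n : K) * w0 := by
    intro x
    rw [FractionalIdeal.mem_one_iff]
    constructor
    · rintro ⟨y, rfl⟩
      obtain ⟨m, n, rfl⟩ := aux_int_decomp K ω hω h2 y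
      exact ⟨m, n, by push_cast [map_add, map_mul, map_intCast]; ring⟩
    · rintro ⟨m, n, rfl⟩
      refine ⟨(m : 𝓞 K) + (n : 𝓞 K) * ω, ?_⟩
      push_cast [map_add, map_mul, map_intCast]
      ring
  have hτinj : Function.Injective τ := τ.injective
  constructor
  · intro H
    have hex : ∃ a ∈ 𝔞, a ≠ 0 := by
      by_contra hno
      push_neg at hno
      exact h𝔞 (FractionalIdeal.eq_zero_iff.mpr hno)
    obtain ⟨a₀, ha₀, ha₀ne⟩ := hex
    have hwa₀ : w0 * a₀ ∈ 𝔞 := by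
      have := Submodule.smul_mem (𝔞 : Submodule (𝓞 K) K) ω (FractionalIdeal.mem_coe.mpr ha₀)
      rw [Algebra.smul_def] at this
      exact FractionalIdeal.mem_coe.mp this
    set u : ℂ := τ a₀ with hudef
    have hune : u ≠ 0 := fun h => ha₀ne (hτinj (by rw [← hudef, h, map_zero]))
    obtain ⟨n₀, hn₀⟩ := H a₀ ha₀
    obtain ⟨n₁, hn₁⟩ := H (w0 * a₀) hwa₀
    have hn₀' : u.re * z.im + u.im * z.re = (n₀ : ℝ) := by
      rw [← Complex.mul_im]; exact hn₀
    have hn₁' : s * ((n₀:ℝ)) + αR * (u.re * z.re - u.im * z.im) = (n₁ : ℝ) := by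
      rw [map_mul, ← hwcdef, ← hudef, mul_assoc] at hn₁
      rw [Complex.mul_im, Complex.mul_im, Complex.mul_re, ← hsdef, hαim] at hn₁
      rw [← hn₀'] ; linarith [hn₁]
    set bnum : K := ((n₁ + c * n₀ : ℤ) : K) + ((n₀ : ℤ) : K) * w0 with hbnumdef
    set b : K := bnum / a₀ with hbdef
    have key : u * ((αR : ℂ) * z) = τ bnum := by
      rw [hbnumdef, hτdecCZ]
      apply Complex.ext
      · simp only [Complex.mul_re, Complex.mul_im, Complex.add_re, Complex.add_im,
          Complex.ofReal_re, Complex.ofReal_im,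
          Complex.intCast_re, Complex.intCast_im, ← hsdef, hαim]
        push_cast
        rw [hc2s]
        linarith [hn₁']
      · simp only [Complex.mul_re, Complex.mul_im, Complex.add_re, Complex.add_im,
          Complex.ofReal_re, Complex.ofReal_im,
          Complex.intCast_re, Complex.intCast_im, ← hsdef, hαim]
        push_cast
        linear_combination αR * hn₀'
    have hazb : (αR : ℂ) * z = τ b := by
      rw [hbdef, map_div₀, ← hudef, eq_div_iff hune]
      linear_combination key
    refine ⟨b, ?_, hazb⟩
    rw [FractionalIdeal.mem_inv_iff h𝔞]
    intro a ha
    obtain ⟨k₀, hk₀⟩ := H a ha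
    have hwa : w0 * a ∈ 𝔞 := by
      have := Submodule.smul_mem (𝔞 : Submodule (𝓞 K) K) ω (FractionalIdeal.mem_coe.mpr ha)
      rw [Algebra.smul_def] at this
      exact FractionalIdeal.mem_coe.mp this
    obtain ⟨k₁, hk₁⟩ := H (w0 * a) hwa
    obtain ⟨m, n, hmn⟩ := aux_rat_decomp K hdeg τ (algebraMap (𝓞 K) K ω) himne (a * b)
    rw [← hw0def] at hmn
    have htab2 : (τ (a * b)).im = αR * (k₀ : ℝ) := by
      have h1 : τ (a * b) = (αR : ℂ) * (τ a * z) := by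
        rw [map_mul, ← hazb]; ring
      rw [h1, Complex.mul_im, Complex.ofReal_re, Complex.ofReal_im, hk₀]
      ring
    have hn_eq : (n : ℝ) = (k₀ : ℝ) := by
      have h2' := htab2
      rw [hmn, hτdecIm] at h2'
      have h3 : (n : ℝ) * αR = (k₀ : ℝ) * αR := by linarith [h2']
      exact mul_right_cancel₀ hαne h3
    have hwab : w0 * (a * b) = ((-(n * (d:ℚ)) : ℚ) : K) + (((m - n * (c:ℚ)) : ℚ) : K) * w0 := by
      rw [hmn]
      push_cast
      linear_combination (n : K) * hrelK
    have htwab2 : (τ (w0 * (a * b))).im = αR * (k₁ : ℝ) := by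
      have h1 : τ (w0 * (a * b)) = (αR : ℂ) * (τ (w0 * a) * z) := by
        rw [show w0 * (a * b) = (w0 * a) * b by ring, map_mul, map_mul, ← hazb]; ring
      rw [h1, Complex.mul_im, Complex.ofReal_re, Complex.ofReal_im, hk₁]
      ring
    have hm_eq : (m : ℝ) = ((k₁ : ℝ) + (c : ℝ) * (k₀ : ℝ)) := by
      have h2' := htwab2
      rw [hwab, hτdecIm] at h2'
      push_cast at h2'
      have : ((m : ℝ) - n * c) * αR = αR * k₁ := h2'
      rw [hn_eq] at this
      have := mul_right_cancel₀ hαne (by linarith [this] : ((m:ℝ) - k₀ * c) * αR = (k₁ : ℝ) * αR)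
      linarith [this]
    -- conclude integrality
    have hmq : m = ((k₁ + c * k₀ : ℤ) : ℚ) := by
      have : (m : ℝ) = (((k₁ + c * k₀ : ℤ) : ℚ) : ℝ) := by push_cast; linarith [hm_eq]
      exact_mod_cast this
    have hnq : n = ((k₀ : ℤ) : ℚ) := by
      have : (n : ℝ) = (((k₀ : ℤ) : ℚ) : ℝ) := by push_cast; linarith [hn_eq]
      exact_mod_cast this
    have : b * a = ((k₁ + c * k₀ : ℤ) : K) + ((k₀ : ℤ) : K) * w0 := by
      rw [mul_comm, hmn, hmq, hnq]; push_cast; ring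
    rw [hone]
    exact ⟨k₁ + c * k₀, k₀, this⟩
  · rintro ⟨b, hb, hazb⟩ a ha
    have hba : b * a ∈ (1 : FractionalIdeal (nonZeroDivisors (𝓞 K)) K) :=
      (FractionalIdeal.mem_inv_iff h𝔞).mp hb a ha
    obtain ⟨m, n, hmn⟩ := (hone (b * a)).mp hba
    refine ⟨n, ?_⟩
    have h1 : (αR : ℂ) * (τ a * z) = τ (b * a) := by
      rw [map_mul, ← hazb]; ring
    have him := congrArg Complex.im h1
    rw [hmn, hτdecImZ, Complex.mul_im, Complex.ofReal_re, Complex.ofReal_im] at him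
    have h3 : (τ a * z).im * αR = (n:ℝ) * αR := by linarith [him]
    exact mul_right_cancel₀ hαne h3
end pt

/-- Dual lattice computation: for `Γ = τ(𝔞₁) × ⋯ × τ(𝔞_g) ⊆ ℂ^g` and
`w ∈ ℂ^g`, one has `Im (∑ i, γᵢ · conj wᵢ) ∈ ℤ` for all `γ ∈ Γ` iff for each `i`,
`α_R · conj wᵢ ∈ τ(𝔞ᵢ⁻¹)`. -/
theorem stmt_7
    (K : Type*) [Field K] [NumberField K]
    (hdeg : Module.finrank ℚ K = 2)
    (hcplx : IsEmpty (K →+* ℝ))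
    (τ : K →+* ℂ)
    (ω : 𝓞 K) (hω : Algebra.adjoin ℤ ({ω} : Set (𝓞 K)) = ⊤)
    (αR : ℝ) (hα : αR = (τ (algebraMap (𝓞 K) K ω)).im) (hαpos : 0 < αR)
    (g : ℕ)
    (𝔞 : Fin g → FractionalIdeal (nonZeroDivisors (𝓞 K)) K)
    (h𝔞 : ∀ i, 𝔞 i ≠ 0)
    (Γ : Set (Fin g → ℂ))
    (hΓ : Γ = {v : Fin g → ℂ | ∀ i, ∃ a ∈ 𝔞 i, v i = τ a})
    (w : Fin g → ℂ) :
    (∀ γ ∈ Γ, ∃ n : ℤ, (∑ i, γ i * starRingEnd ℂ (w i)).im = n) ↔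
      (∀ i, ∃ b ∈ (𝔞 i)⁻¹, (αR : ℂ) * starRingEnd ℂ (w i) = τ b) := by
  constructor
  · intro H i
    refine (aux_point K hdeg τ ω hω αR hα hαpos (𝔞 i) (h𝔞 i) (starRingEnd ℂ (w i))).mp ?_
    intro a ha
    set γ : Fin g → ℂ := fun j => if j = i then τ a else 0 with hγdef
    have hγ : γ ∈ Γ := by
      rw [hΓ]
      intro j
      by_cases hji : j = i
      · subst hji; exact ⟨a, ha, by simp [hγdef]⟩
      · refine ⟨0, ?_, by simp [hγdef, hji]⟩
        exact FractionalIdeal.mem_coe.mp ((𝔞 j : Submodule (𝓞 K) K).zero_mem)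
    obtain ⟨n, hn⟩ := H γ hγ
    refine ⟨n, ?_⟩
    rw [← hn]
    congr 1
    rw [show ∑ j, γ j * starRingEnd ℂ (w j)
        = ∑ j, if j = i then τ a * starRingEnd ℂ (w j) else 0 by
      refine Finset.sum_congr rfl fun j _ => ?_
      by_cases hji : j = i <;> simp [hγdef, hji]]
    rw [Finset.sum_ite_eq' Finset.univ i (fun j => τ a * starRingEnd ℂ (w j))]
    simp
  · intro H γ hγ
    rw [hΓ] at hγ
    choose a ha hγa using hγ
    have hpt : ∀ i, ∃ n : ℤ, (τ (a i) * starRingEnd ℂ (w i)).im = n := by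
      intro i
      exact (aux_point K hdeg τ ω hω αR hα hαpos (𝔞 i) (h𝔞 i) (starRingEnd ℂ (w i))).mpr
        (H i) (a i) (ha i)
    choose n hn using hpt
    refine ⟨∑ i, n i, ?_⟩
    rw [Complex.im_sum]
    push_cast
    refine Finset.sum_congr rfl fun i _ => ?_
    rw [hγa i, hn i]
end

section
/- Let 𝔞 be a nonzero fractional ideal of 𝓞_K, let x ∈ ℂ be nonzero, and let Λ = {τ(a)·x : a ∈ 𝔞}. Then the additive subgroup of ℝ generated by {Im(z·conj(w)) : z, w ∈ Λ} equals N(𝔞)·|x|²·α_R·ℤ, where N(𝔞) ∈ ℚ_{>0} is the absolute norm of the fractional ideal 𝔞. (Consequently, a hermitian form μ·z·conj(w) with μ ∈ ℝ_{>0} induces a principal polarization on ℂ/Λ exactly when μ = 1/(α_R·N(𝔞)·|x|²).) -/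
/-!
Choose a `ℤ`-basis `e₁, e₂` of `𝔞`. Since `(z, w) ↦ Im (z · conj w)` is alternating and
`ℤ`-bilinear, the group generated by its values on `Λ = τ(𝔞)·x` is generated by its value on
`τ(e₁)x, τ(e₂)x`, which is `|x|²` times `Im (τ e₁ · conj (τ e₂))`. Writing `e₁, e₂` in the
`ℚ`-basis `1, ω` of `K`, that imaginary part is `-det · Im τ(ω)`, and the absolute value of the
determinant of this change of basis is `N(𝔞)`.
-/

open NumberField ComplexConjugate Module

theorem Complex.im_zsmul_add_zsmul_mul_conj (u v : ℂ) (m₀ m₁ n₀ n₁ : ℤ) :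
    ((m₀ • u + m₁ • v) * conj (n₀ • u + n₁ • v)).im =
      (m₀ * n₁ - m₁ * n₀ : ℤ) * (u * conj v).im := by
  simp only [zsmul_eq_mul, map_add, map_mul, map_intCast, Complex.add_im, Complex.add_re,
    Complex.mul_im, Complex.mul_re, Complex.conj_re, Complex.conj_im, Complex.intCast_re,
    Complex.intCast_im]
  push_cast
  ring

theorem Complex.im_mul_mul_conj_mul (z w x : ℂ) :
    (z * x * conj (w * x)).im = ‖x‖ ^ 2 * (z * conj w).im := by
  rw [map_mul, mul_mul_mul_comm, Complex.mul_conj', mul_comm, ← Complex.ofReal_pow,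
    Complex.im_ofReal_mul]

theorem closure_im_mul_conj_eq_zmultiples {Λ : Set ℂ} {u v : ℂ} (hu : u ∈ Λ) (hv : v ∈ Λ)
    (hΛ : ∀ z ∈ Λ, ∃ m n : ℤ, z = m • u + n • v) :
    AddSubgroup.closure {r : ℝ | ∃ z ∈ Λ, ∃ w ∈ Λ, r = (z * conj w).im} =
      AddSubgroup.zmultiples (u * conj v).im := by
  refine le_antisymm ?_ ?_
  · rw [AddSubgroup.closure_le]
    rintro _ ⟨z, hz, w, hw, rfl⟩
    obtain ⟨m₀, m₁, rfl⟩ := hΛ z hz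
    obtain ⟨n₀, n₁, rfl⟩ := hΛ w hw
    rw [Complex.im_zsmul_add_zsmul_mul_conj]
    exact ⟨m₀ * n₁ - m₁ * n₀, zsmul_eq_mul _ _⟩
  · rw [AddSubgroup.zmultiples_le]
    exact AddSubgroup.subset_closure ⟨u, hu, v, hv, rfl⟩

theorem AddSubgroup.zmultiples_eq_of_abs_eq {a b : ℝ} (h : |a| = |b|) :
    AddSubgroup.zmultiples a = AddSubgroup.zmultiples b := by
  rcases abs_eq_abs.mp h with rfl | rfl
  · rfl
  · exact AddSubgroup.zmultiples_neg

theorem Module.Basis.eq_repr_zero_smul_add_repr_one_smul {R M : Type*} [Semiring R]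
    [AddCommMonoid M] [Module R M] (b : Basis (Fin 2) R M) (y : M) :
    y = b.repr y 0 • b 0 + b.repr y 1 • b 1 := by
  conv_lhs => rw [← b.sum_repr y]
  exact Fin.sum_univ_two _

theorem exists_basis_one_gen {R S : Type*} [CommRing R] [IsDomain R] [IsIntegrallyClosed R]
    [CommRing S] [IsDomain S] [Algebra R S] [IsTorsionFree R S] {x : S}
    (hx : IsIntegral R x) (hadj : Algebra.adjoin R {x} = ⊤) (hrank : finrank R S = 2) :
    ∃ b : Basis (Fin 2) R S, b 0 = 1 ∧ b 1 = x := by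
  let pb := PowerBasis.ofAdjoinEqTop' hx hadj
  have hdim : pb.dim = 2 := by rw [← pb.finrank, hrank]
  refine ⟨pb.basis.reindex (finCongr hdim), ?_, ?_⟩
  · simp [Basis.reindex_apply, PowerBasis.basis_eq_pow]
  · rw [Basis.reindex_apply, pb.basis_eq_pow, PowerBasis.ofAdjoinEqTop'_gen]
    exact pow_one x

theorem im_map_mul_conj_map_eq_neg_det {K : Type*} [Field K] [Algebra ℚ K] (τ : K →+* ℂ)
    (b : Basis (Fin 2) ℚ K) (hb : b 0 = 1) (v : Fin 2 → K) :
    (τ (v 0) * conj (τ (v 1))).im = -(b.det v : ℝ) * (τ (b 1)).im := by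
  have hτ (y : K) : τ y = (b.repr y 0 : ℂ) + (b.repr y 1 : ℂ) * τ (b 1) := by
    conv_lhs => rw [b.eq_repr_zero_smul_add_repr_one_smul y, hb]
    simp [Algebra.smul_def]
  rw [Basis.det_apply, Matrix.det_fin_two, hτ (v 0), hτ (v 1)]
  simp only [Basis.toMatrix_apply, map_add, map_mul, map_ratCast, Complex.add_im, Complex.add_re,
    Complex.mul_im, Complex.mul_re, Complex.conj_re, Complex.conj_im, Complex.ratCast_im,
    Complex.ratCast_re]
  push_cast
  ring

theorem FractionalIdeal.nonempty_basis_fin {K : Type*} [Field K] [NumberField K] {n : ℕ}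
    (hn : finrank ℤ (𝓞 K) = n) (I : FractionalIdeal (nonZeroDivisors (𝓞 K)) K) (hI : I ≠ 0) :
    Nonempty (Basis (Fin n) ℤ I) := by
  have hcard : Fintype.card (Module.Free.ChooseBasisIndex ℤ I) = n := by
    rw [← finrank_eq_card_chooseBasisIndex, ← hn]
    exact fractionalIdeal_rank K (Units.mk0 I hI)
  exact ⟨(fractionalIdealBasis K I).reindex (Fintype.equivFinOfCardEq hcard)⟩

theorem stmt_8_general
    (K : Type*) [Field K] [NumberField K]
    (hdeg : Module.finrank ℚ K = 2)
    (τ : K →+* ℂ)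
    (ω : 𝓞 K) (hω : Algebra.adjoin ℤ ({ω} : Set (𝓞 K)) = ⊤)
    (αR : ℝ) (hα : αR = (τ (algebraMap (𝓞 K) K ω)).im)
    (𝔞 : FractionalIdeal (nonZeroDivisors (𝓞 K)) K) (h𝔞 : 𝔞 ≠ 0)
    (x : ℂ)
    (Λ : Set ℂ) (hΛ : Λ = {z : ℂ | ∃ a ∈ 𝔞, z = τ a * x}) :
    AddSubgroup.closure {r : ℝ | ∃ z ∈ Λ, ∃ w ∈ Λ, r = (z * starRingEnd ℂ w).im} =
      AddSubgroup.zmultiples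
        (((FractionalIdeal.absNorm 𝔞 : ℚ) : ℝ) * ‖x‖ ^ 2 * αR) := by
  have hrank : Module.finrank ℤ (𝓞 K) = 2 := by rw [RingOfIntegers.rank, hdeg]
  obtain ⟨b, hb0, hb1⟩ := exists_basis_one_gen (IsIntegral.of_finite ℤ ω) hω hrank
  obtain ⟨bI⟩ := FractionalIdeal.nonempty_basis_fin hrank 𝔞 h𝔞
  let v : Fin 2 → K := (↑) ∘ bI
  have hmem (i : Fin 2) : τ (v i) * x ∈ Λ := hΛ ▸ ⟨v i, (bI i).2, rfl⟩
  have hspan (z) (hz : z ∈ Λ) : ∃ m n : ℤ, z = m • (τ (v 0) * x) + n • (τ (v 1) * x) := by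
    obtain ⟨a, ha, rfl⟩ := hΛ ▸ hz
    refine ⟨bI.repr ⟨a, ha⟩ 0, bI.repr ⟨a, ha⟩ 1, ?_⟩
    conv_lhs => rw [show a = ((⟨a, ha⟩ : 𝔞) : K) from rfl,
      bI.eq_repr_zero_smul_add_repr_one_smul ⟨a, ha⟩]
    simp only [Submodule.coe_add, Submodule.coe_smul_of_tower, map_add, map_zsmul, add_mul,
      smul_mul_assoc]
    rfl
  let b₀ : Basis (Fin 2) ℚ K := b.localizationLocalization ℚ (nonZeroDivisors ℤ) K
  have hdet : |b₀.det v| = FractionalIdeal.absNorm 𝔞 :=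
    FractionalIdeal.abs_det_basis_change b 𝔞 bI
  have hb₀ : b₀ 0 = 1 := by simp [b₀, Basis.localizationLocalization_apply, hb0]
  rw [closure_im_mul_conj_eq_zmultiples (hmem 0) (hmem 1) hspan, Complex.im_mul_mul_conj_mul,
    im_map_mul_conj_map_eq_neg_det τ b₀ hb₀]
  apply AddSubgroup.zmultiples_eq_of_abs_eq
  simp only [b₀, Basis.localizationLocalization_apply, hb1, hα, neg_mul, mul_neg, abs_neg, abs_mul,
    abs_pow, abs_norm, ← Rat.cast_abs, hdet, abs_of_nonneg (FractionalIdeal.absNorm_nonneg 𝔞)]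
  ring

/-- For `Λ = τ(𝔞)·x ⊆ ℂ` with `𝔞` a nonzero fractional ideal of `𝓞 K` and
`x ≠ 0`, the additive subgroup of `ℝ` generated by `{Im (z · conj w) : z, w ∈ Λ}` equals
`N(𝔞)·|x|²·α_R·ℤ`. -/
theorem stmt_8
    (K : Type*) [Field K] [NumberField K]
    (hdeg : Module.finrank ℚ K = 2)
    (hcplx : IsEmpty (K →+* ℝ))
    (τ : K →+* ℂ)
    (ω : 𝓞 K) (hω : Algebra.adjoin ℤ ({ω} : Set (𝓞 K)) = ⊤)
    (αR : ℝ) (hα : αR = (τ (algebraMap (𝓞 K) K ω)).im) (hαpos : 0 < αR)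
    (𝔞 : FractionalIdeal (nonZeroDivisors (𝓞 K)) K) (h𝔞 : 𝔞 ≠ 0)
    (x : ℂ) (hx : x ≠ 0)
    (Λ : Set ℂ) (hΛ : Λ = {z : ℂ | ∃ a ∈ 𝔞, z = τ a * x}) :
    AddSubgroup.closure {r : ℝ | ∃ z ∈ Λ, ∃ w ∈ Λ, r = (z * starRingEnd ℂ w).im} =
      AddSubgroup.zmultiples
        (((FractionalIdeal.absNorm 𝔞 : ℚ) : ℝ) * ‖x‖ ^ 2 * αR) :=
  stmt_8_general K hdeg τ ω hω αR hα 𝔞 h𝔞 x Λ hΛ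
end

section
/- Let g ≥ 1 and let L be a finitely generated 𝓞_K-submodule of K^g whose K-span is all of K^g. Suppose that for every nonzero fractional ideal 𝔞 of 𝓞_K the 𝓞_K-modules L and 𝔞·L (the 𝓞_K-submodule of K^g generated by {a·v : a ∈ 𝔞, v ∈ L}) are isomorphic. Then every element c of the ideal class group Cl(𝓞_K) satisfies c^g = 1, i.e. the exponent of Cl(𝓞_K) divides g. -/
open NumberField
set_option linter.unusedSectionVars false

section Aux

lemma prod_mem_pow {R A : Type*} [CommSemiring R] [CommSemiring A] [Algebra R A]
    (M : Submodule R A) : ∀ (n : ℕ) (a : Fin n → A), (∀ i, a i ∈ M) → (∏ i, a i) ∈ M ^ n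
  | 0, a, _ => by
      simp only [Finset.univ_eq_empty, Finset.prod_empty, pow_zero]
      exact Submodule.mem_one.mpr ⟨1, map_one _⟩
  | n + 1, a, h => by
      rw [Fin.prod_univ_succ, pow_succ']
      exact Submodule.mul_mem_mul (h 0) (prod_mem_pow M n (fun i => a i.succ) (fun i => h i.succ))

variable {K : Type*} [Field K] [NumberField K] {g : ℕ}

/-- The fractional ideal of `g×g` determinants of rows from `L`. -/
def detSpan (L : Submodule (𝓞 K) (Fin g → K)) : Submodule (𝓞 K) K :=
  Submodule.span (𝓞 K)
    {x : K | ∃ v : Fin g → Fin g → K, (∀ i, v i ∈ L) ∧ x = (Matrix.of v).det}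

lemma det_mem_detSpan {L : Submodule (𝓞 K) (Fin g → K)} {v : Fin g → Fin g → K}
    (hv : ∀ i, v i ∈ L) : (Matrix.of v).det ∈ detSpan L :=
  Submodule.subset_span ⟨v, hv, rfl⟩

end Aux

section Aux2
variable {K : Type*} [Field K] [NumberField K] {g : ℕ}

lemma detSpan_span_aL_le (L : Submodule (𝓞 K) (Fin g → K))
    (𝔞 : FractionalIdeal (nonZeroDivisors (𝓞 K)) K) :
    detSpan (Submodule.span (𝓞 K) {x : Fin g → K | ∃ a ∈ 𝔞, ∃ v ∈ L, x = a • v}) ≤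
      ((𝔞 : Submodule (𝓞 K) K)) ^ g * detSpan L := by
  set T : Set (Fin g → K) := {x | ∃ a ∈ 𝔞, ∃ v ∈ L, x = a • v} with hT
  have key : ∀ n : ℕ, ∀ v : Fin g → Fin g → K,
      (∀ i : Fin g, (i : ℕ) < n → v i ∈ Submodule.span (𝓞 K) T) →
      (∀ i : Fin g, n ≤ (i : ℕ) → v i ∈ T) →
      (Matrix.of v).det ∈ ((𝔞 : Submodule (𝓞 K) K)) ^ g * detSpan L := by
    intro n
    induction n with
    | zero =>
      intro v _ h2
      choose a ha w hw hvw using fun i => h2 i (Nat.zero_le _)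
      have hv : Matrix.of v = Matrix.of fun i j => a i * (Matrix.of w) i j := by
        ext i j
        show v i j = a i * w i j
        rw [hvw i]; rfl
      rw [hv, Matrix.det_mul_column]
      exact Submodule.mul_mem_mul
        (prod_mem_pow _ g a (fun i => FractionalIdeal.mem_coe.mpr (ha i)))
        (det_mem_detSpan hw)
    | succ n IH =>
      intro v h1 h2
      by_cases hn : n < g
      · set i0 : Fin g := ⟨n, hn⟩ with hi0def
        have hv0 : v i0 ∈ Submodule.span (𝓞 K) T := h1 i0 (Nat.lt_succ_self n)
        have main := Submodule.span_induction
          (p := fun x _ => ((Matrix.of v).updateRow i0 x).det ∈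
            ((𝔞 : Submodule (𝓞 K) K)) ^ g * detSpan L)
          (fun x hx => by
            have hrw : (Matrix.of v).updateRow i0 x = Matrix.of (Function.update v i0 x) := rfl
            rw [hrw]
            refine IH (Function.update v i0 x) (fun i hi => ?_) (fun i hi => ?_)
            · have hne : i ≠ i0 := by
                intro h; rw [h] at hi; simp [hi0def] at hi
              rw [Function.update_of_ne hne]
              exact h1 i (by omega)
            · by_cases hi0 : i = i0
              · rw [hi0, Function.update_self]; exact hx
              · rw [Function.update_of_ne hi0]
                refine h2 i ?_
                have : (i : ℕ) ≠ n := fun h => hi0 (Fin.ext (by simp [hi0def, h]))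
                omega)
          (by
            have h0 : ((Matrix.of v).updateRow i0 (0 : Fin g → K)).det = 0 :=
              Matrix.det_eq_zero_of_row_eq_zero i0 (fun j => by simp)
            rw [h0]; exact zero_mem _)
          (fun x y hx hy px py => by
            rw [Matrix.det_updateRow_add]; exact add_mem px py)
          (fun r x hx px => by
            have h1' : (r • x : Fin g → K) = (algebraMap (𝓞 K) K r) • x :=
              (algebraMap_smul K r x).symm
            rw [h1', Matrix.det_updateRow_smul, ← Algebra.smul_def]
            exact Submodule.smul_mem _ _ px)
          hv0
        rwa [show (Matrix.of v).updateRow i0 (v i0) = Matrix.of v from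
          Matrix.updateRow_eq_self _ _] at main
      · push_neg at hn
        exact IH v (fun i hi => h1 i (by omega)) (fun i hi => absurd i.isLt (by omega))
  refine Submodule.span_le.mpr ?_
  rintro x ⟨v, hv, rfl⟩
  exact key g v (fun i _ => hv i) (fun i hi => absurd i.isLt (by omega))

end Aux2
section Aux3
variable {K : Type*} [Field K] [NumberField K] {g : ℕ}

lemma le_detSpan_span_aL (L : Submodule (𝓞 K) (Fin g → K))
    (𝔞 : FractionalIdeal (nonZeroDivisors (𝓞 K)) K) :
    ((𝔞 : Submodule (𝓞 K) K)) ^ g * detSpan L ≤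
      detSpan (Submodule.span (𝓞 K) {x : Fin g → K | ∃ a ∈ 𝔞, ∃ v ∈ L, x = a • v}) := by
  set T : Set (Fin g → K) := {x | ∃ a ∈ 𝔞, ∃ v ∈ L, x = a • v} with hT
  set D' : Submodule (𝓞 K) K := detSpan (Submodule.span (𝓞 K) T) with hD'
  have key : ∀ n : ℕ, n ≤ g → ∀ m ∈ ((𝔞 : Submodule (𝓞 K) K)) ^ n,
      ∀ w : Fin g → Fin g → K,
      (∀ i : Fin g, (i : ℕ) < n → w i ∈ L) →
      (∀ i : Fin g, n ≤ (i : ℕ) → w i ∈ Submodule.span (𝓞 K) T) →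
      m * (Matrix.of w).det ∈ D' := by
    intro n
    induction n with
    | zero =>
      intro _ m hm w _ h2
      rw [pow_zero] at hm
      obtain ⟨t, ht⟩ := Submodule.mem_one.mp hm
      rw [← ht, ← Algebra.smul_def]
      exact Submodule.smul_mem _ t (det_mem_detSpan (fun i => h2 i (Nat.zero_le _)))
    | succ n IH =>
      intro hng m hm w h1 h2
      have hn : n < g := hng
      set i0 : Fin g := ⟨n, hn⟩ with hi0def
      rw [pow_succ] at hm
      refine Submodule.mul_induction_on hm (fun m' hm' a ha => ?_) (fun x y hx hy => ?_)
      · have hdet : a * (Matrix.of w).det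
            = (Matrix.of (Function.update w i0 (a • w i0))).det := by
          have hrw : Matrix.of (Function.update w i0 (a • w i0))
              = (Matrix.of w).updateRow i0 (a • w i0) := rfl
          rw [hrw, Matrix.det_updateRow_smul,
            show (Matrix.of w).updateRow i0 (w i0) = Matrix.of w from
              Matrix.updateRow_eq_self _ _]
        rw [mul_assoc, hdet]
        refine IH (le_of_lt hng) m' hm' (Function.update w i0 (a • w i0))
          (fun i hi => ?_) (fun i hi => ?_)
        · have hne : i ≠ i0 := fun h => by rw [h] at hi; simp [hi0def] at hi
          rw [Function.update_of_ne hne]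
          exact h1 i (by omega)
        · by_cases hie : i = i0
          · rw [hie, Function.update_self]
            exact Submodule.subset_span ⟨a, FractionalIdeal.mem_coe.mp ha, w i0,
              h1 i0 (by simp [hi0def]), rfl⟩
          · rw [Function.update_of_ne hie]
            refine h2 i ?_
            have : (i : ℕ) ≠ n := fun h => hie (Fin.ext (by simp [hi0def, h]))
            omega
      · rw [add_mul]; exact add_mem hx hy
  refine Submodule.mul_le.mpr (fun m hm y hy => ?_)
  refine Submodule.span_induction
    (p := fun y _ => m * y ∈ D')
    (fun y hy => ?_)
    (by rw [mul_zero]; exact zero_mem _)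
    (fun x y hx hy px py => by rw [mul_add]; exact add_mem px py)
    (fun r x hx px => by rw [mul_smul_comm]; exact Submodule.smul_mem _ _ px)
    hy
  obtain ⟨w, hw, rfl⟩ := hy
  exact key g le_rfl m hm w (fun i _ => hw i) (fun i hi => absurd i.isLt (by omega))

end Aux3
section Aux4
variable {K : Type*} [Field K] [NumberField K] {g : ℕ}

open Matrix in
lemma det_rows_map (f : (Fin g → K) →ₗ[K] (Fin g → K)) (w : Fin g → Fin g → K) :
    (Matrix.of fun i => f (w i)).det = (Matrix.of w).det * (LinearMap.toMatrix' f).det := by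
  have hmat : (Matrix.of fun i => f (w i)) = Matrix.of w * (LinearMap.toMatrix' f)ᵀ := by
    ext i j
    have hf : f (w i) = (LinearMap.toMatrix' f) *ᵥ (w i) := by
      rw [← Matrix.toLin'_apply, Matrix.toLin'_toMatrix']
    show (f (w i)) j = _
    rw [hf]
    simp [Matrix.mul_apply, Matrix.mulVec, dotProduct, mul_comm]
  rw [hmat, Matrix.det_mul, Matrix.det_transpose]

lemma detSpan_map (L : Submodule (𝓞 K) (Fin g → K)) (f : (Fin g → K) →ₗ[K] (Fin g → K)) :
    detSpan (Submodule.map (f.restrictScalars (𝓞 K)) L) =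
      Submodule.span (𝓞 K) {(LinearMap.toMatrix' f).det} * detSpan L := by
  set d : K := (LinearMap.toMatrix' f).det with hd
  apply le_antisymm
  · refine Submodule.span_le.mpr ?_
    rintro x ⟨v, hv, rfl⟩
    choose w hwL hww using fun i => Submodule.mem_map.mp (hv i)
    have hvw : Matrix.of v = Matrix.of fun i => f (w i) := by
      ext i j
      show v i j = (f (w i)) j
      rw [← hww i]
      rfl
    rw [hvw, det_rows_map, mul_comm (Matrix.of w).det d]
    exact Submodule.mul_mem_mul (Submodule.mem_span_singleton_self d) (det_mem_detSpan hwL)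
  · refine Submodule.mul_le.mpr (fun m hm y hy => ?_)
    obtain ⟨t, rfl⟩ := Submodule.mem_span_singleton.mp hm
    refine Submodule.span_induction
      (p := fun y _ => (t • d) * y ∈ detSpan (Submodule.map (f.restrictScalars (𝓞 K)) L))
      (fun y hy => ?_)
      (by rw [mul_zero]; exact zero_mem _)
      (fun x y hx hy px py => by rw [mul_add]; exact add_mem px py)
      (fun r x hx px => by rw [mul_smul_comm]; exact Submodule.smul_mem _ _ px)
      hy
    obtain ⟨w, hw, rfl⟩ := hy
    have : (t • d) * (Matrix.of w).det = t • ((Matrix.of fun i => f (w i)).det) := by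
      rw [det_rows_map, smul_mul_assoc, mul_comm]
    rw [this]
    exact Submodule.smul_mem _ t
      (det_mem_detSpan (fun i => Submodule.mem_map_of_mem (hw i)))

end Aux4
section Aux5
variable {K : Type*} [Field K] [NumberField K] {g : ℕ}

lemma detSpan_isFractional (L : Submodule (𝓞 K) (Fin g → K)) (hfg : L.FG) :
    IsFractional (nonZeroDivisors (𝓞 K)) (detSpan L) := by
  obtain ⟨S, hS⟩ := hfg
  obtain ⟨r, hr⟩ := IsLocalization.exist_integer_multiples (nonZeroDivisors (𝓞 K))
    (S ×ˢ (Finset.univ : Finset (Fin g))) (fun p : (Fin g → K) × Fin g => p.1 p.2)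
  -- every element of L has all coordinates with denominator r
  have hL : ∀ v ∈ L, ∀ j, IsLocalization.IsInteger (𝓞 K) ((r : 𝓞 K) • v j) := by
    have hsub : L ≤
        { carrier := {v : Fin g → K | ∀ j, IsLocalization.IsInteger (𝓞 K) ((r : 𝓞 K) • v j)}
          zero_mem' := fun j => by
            simp only [Pi.zero_apply, smul_zero]
            exact IsLocalization.isInteger_zero
          add_mem' := fun {x y} hx hy j => by
            simp only [Pi.add_apply, smul_add]
            exact IsLocalization.isInteger_add (hx j) (hy j)
          smul_mem' := fun t x hx j => by
            simp only [Pi.smul_apply]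
            rw [smul_comm]
            exact IsLocalization.isInteger_smul (hx j) } := by
      rw [← hS]
      refine Submodule.span_le.mpr (fun v hv j => ?_)
      exact hr (v, j) (Finset.mem_product.mpr ⟨hv, Finset.mem_univ j⟩)
    exact fun v hv j => hsub hv j
  refine ⟨(r : 𝓞 K) ^ g, pow_mem r.2 g, fun b hb => ?_⟩
  -- closure under the submodule operations
  refine Submodule.span_induction
    (p := fun b _ => IsLocalization.IsInteger (𝓞 K) ((r : 𝓞 K) ^ g • b))
    (fun b hbgen => ?_)
    (by rw [smul_zero]; exact IsLocalization.isInteger_zero)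
    (fun x y hx hy px py => by rw [smul_add]; exact IsLocalization.isInteger_add px py)
    (fun t x hx px => by rw [smul_comm]; exact IsLocalization.isInteger_smul px)
    hb
  obtain ⟨w, hw, rfl⟩ := hbgen
  choose Y hY using fun i j => hL (w i) (hw i) j
  have hdet : ((r : 𝓞 K) ^ g) • (Matrix.of w).det
      = algebraMap (𝓞 K) K ((Matrix.of Y).det) := by
    have h1 : ((r : 𝓞 K) ^ g) • (Matrix.of w).det
        = (Matrix.of fun i j => (algebraMap (𝓞 K) K r) * w i j).det := by
      show _ = (Matrix.of fun i j => (fun _ : Fin g => algebraMap (𝓞 K) K r) i * Matrix.of w i j).det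
      rw [Matrix.det_mul_column, Finset.prod_const, Finset.card_univ, Fintype.card_fin,
        Algebra.smul_def, map_pow]
    have h2 : (Matrix.of fun i j => (algebraMap (𝓞 K) K r) * w i j)
        = (Matrix.of Y).map (algebraMap (𝓞 K) K) := by
      ext i j
      show (algebraMap (𝓞 K) K r) * w i j = algebraMap (𝓞 K) K (Y i j)
      rw [hY i j, Algebra.smul_def]
    rw [h1, h2]
    exact ((algebraMap (𝓞 K) K).map_det (Matrix.of Y)).symm
  exact ⟨(Matrix.of Y).det, hdet.symm⟩

lemma exists_basis_mem (L : Submodule (𝓞 K) (Fin g → K))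
    (hspan : Submodule.span K (L : Set (Fin g → K)) = ⊤) :
    ∃ b : Module.Basis (Fin g) K (Fin g → K), ∀ i, b i ∈ L := by
  obtain ⟨s, hsL, hsp, hind⟩ := exists_linearIndependent K (L : Set (Fin g → K))
  rw [hspan] at hsp
  have hfin : s.Finite := hind.setFinite
  haveI : Fintype s := hfin.fintype
  let b0 : Module.Basis s K (Fin g → K) := Module.Basis.mk hind (by rw [Subtype.range_coe, hsp])
  have hcard : Fintype.card s = g := by
    have h1 := Module.finrank_eq_card_basis b0
    rw [Module.finrank_fin_fun] at h1
    omega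
  let e : s ≃ Fin g := Fintype.equivFinOfCardEq hcard
  refine ⟨b0.reindex e, fun i => ?_⟩
  rw [Module.Basis.reindex_apply]
  have : b0 (e.symm i) = ((e.symm i : s) : Fin g → K) := Module.Basis.mk_apply _ _ _
  rw [this]
  exact hsL (e.symm i).2

lemma detSpan_ne_bot (L : Submodule (𝓞 K) (Fin g → K))
    (hspan : Submodule.span K (L : Set (Fin g → K)) = ⊤) :
    detSpan L ≠ ⊥ := by
  obtain ⟨b, hb⟩ := exists_basis_mem L hspan
  intro hbot
  have hmem : (Matrix.of fun i j => b i j).det ∈ detSpan L :=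
    det_mem_detSpan (fun i => hb i)
  rw [hbot, Submodule.mem_bot] at hmem
  -- the matrix of a basis has nonzero determinant
  obtain ⟨v, hv0, hv⟩ := Matrix.exists_vecMul_eq_zero_iff.mpr hmem
  have hsum : ∑ i, v i • b i = 0 := by
    funext j
    have hj := congrFun hv j
    simpa [Matrix.vecMul, dotProduct, Finset.sum_apply] using hj
  have hz := Fintype.linearIndependent_iff.mp b.linearIndependent v hsum
  exact hv0 (funext fun i => hz i)

end Aux5

/-- Let `K` be an imaginary quadratic field and `L` a finitely generated
`𝓞 K`-submodule of `K^g` with full `K`-span.  If `L ≅ 𝔞·L` as `𝓞 K`-modules for every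
nonzero fractional ideal `𝔞`, then every element of the class group satisfies `c ^ g = 1`. -/
theorem stmt_12
    (K : Type*) [Field K] [NumberField K]
    (hdeg : Module.finrank ℚ K = 2)
    (hcplx : IsEmpty (K →+* ℝ))
    (g : ℕ) (hg : 1 ≤ g)
    (L : Submodule (𝓞 K) (Fin g → K))
    (hfg : L.FG)
    (hspan : Submodule.span K (L : Set (Fin g → K)) = ⊤)
    (hiso : ∀ 𝔞 : FractionalIdeal (nonZeroDivisors (𝓞 K)) K, 𝔞 ≠ 0 →
      Nonempty (L ≃ₗ[𝓞 K]
        (Submodule.span (𝓞 K) {x : Fin g → K | ∃ a ∈ 𝔞, ∃ v ∈ L, x = a • v}))) :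
    ∀ c : ClassGroup (𝓞 K), c ^ g = 1 := by

  intro c
  obtain ⟨⟨I, hI⟩, rfl⟩ := ClassGroup.mk0_surjective c
  have hI0 : I ≠ ⊥ := by
    intro h
    exact absurd (h ▸ hI) (fun hb => by
      have := mem_nonZeroDivisors_iff_ne_zero.mp hb
      exact this rfl)
  set 𝔞 : FractionalIdeal (nonZeroDivisors (𝓞 K)) K := (I : FractionalIdeal (nonZeroDivisors (𝓞 K)) K) with h𝔞def
  have h𝔞 : 𝔞 ≠ 0 := FractionalIdeal.coeIdeal_ne_zero.mpr hI0
  obtain ⟨φ⟩ := hiso 𝔞 h𝔞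
  set A𝔞 : Submodule (𝓞 K) (Fin g → K) :=
    Submodule.span (𝓞 K) {x : Fin g → K | ∃ a ∈ 𝔞, ∃ v ∈ L, x = a • v} with hA
  obtain ⟨b, hb⟩ := exists_basis_mem L hspan
  set f : (Fin g → K) →ₗ[K] (Fin g → K) :=
    b.constr K (fun i => ((φ ⟨b i, hb i⟩ : A𝔞) : Fin g → K)) with hfdef
  -- `f` agrees with `φ` on `L`
  have hfL : ∀ v (hv : v ∈ L), f v = ((φ ⟨v, hv⟩ : A𝔞) : Fin g → K) := by
    intro v hv
    obtain ⟨r, hr⟩ := IsLocalization.exist_integer_multiples (nonZeroDivisors (𝓞 K))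
      Finset.univ (fun i : Fin g => b.repr v i)
    choose x hx using fun i => hr i (Finset.mem_univ i)
    have hrv : (r : 𝓞 K) • v = ∑ i, x i • b i := by
      have hv' : ∑ i, b.repr v i • b i = v := b.sum_repr v
      rw [← hv', Finset.smul_sum]
      refine Finset.sum_congr rfl (fun i _ => ?_)
      rw [← smul_assoc, show (r : 𝓞 K) • (b.repr v i) = algebraMap (𝓞 K) K (x i) from (hx i).symm,
        algebraMap_smul]
    have hsub : (r : 𝓞 K) • (⟨v, hv⟩ : L) = ∑ i, x i • (⟨b i, hb i⟩ : L) := by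
      apply Subtype.ext
      push_cast
      simpa using hrv
    set ψ : L →ₗ[𝓞 K] (Fin g → K) := A𝔞.subtype.comp φ.toLinearMap with hψdef
    have hψ : ∀ z : L, ψ z = ((φ z : A𝔞) : Fin g → K) := fun z => rfl
    have hright : (r : 𝓞 K) • ((φ ⟨v, hv⟩ : A𝔞) : Fin g → K)
        = ∑ i, x i • ((φ ⟨b i, hb i⟩ : A𝔞) : Fin g → K) := by
      rw [← hψ, ← map_smul ψ, hsub, map_sum ψ]
      exact Finset.sum_congr rfl (fun i _ => by rw [map_smul ψ, hψ])
    have hleft : (r : 𝓞 K) • f v = ∑ i, x i • ((φ ⟨b i, hb i⟩ : A𝔞) : Fin g → K) := by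
      rw [← f.map_smul_of_tower, hrv, map_sum]
      refine Finset.sum_congr rfl (fun i _ => ?_)
      rw [f.map_smul_of_tower, hfdef, Module.Basis.constr_basis]
    have hrne : ((r : 𝓞 K) : 𝓞 K) ≠ 0 := nonZeroDivisors.ne_zero r.2
    have hrK : (algebraMap (𝓞 K) K) (r : 𝓞 K) ≠ 0 := by
      simpa using (map_ne_zero_iff _ (IsFractionRing.injective (𝓞 K) K)).mpr hrne
    have hcomb : (algebraMap (𝓞 K) K (r : 𝓞 K)) • f v
        = (algebraMap (𝓞 K) K (r : 𝓞 K)) • ((φ ⟨v, hv⟩ : A𝔞) : Fin g → K) := by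
      rw [algebraMap_smul, algebraMap_smul, hleft, hright]
    exact smul_right_injective (Fin g → K) hrK hcomb
  -- the image of `L` under `f` is `A𝔞`
  have hmap : Submodule.map (f.restrictScalars (𝓞 K)) L = A𝔞 := by
    apply le_antisymm
    · rintro _ ⟨v, hv, rfl⟩
      rw [show (f.restrictScalars (𝓞 K)) v = f v from rfl, hfL v hv]
      exact (φ ⟨v, hv⟩).2
    · intro y hy
      refine ⟨(φ.symm ⟨y, hy⟩ : L), (φ.symm ⟨y, hy⟩).2, ?_⟩
      rw [show (f.restrictScalars (𝓞 K)) ((φ.symm ⟨y, hy⟩ : L) : Fin g → K)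
          = f ((φ.symm ⟨y, hy⟩ : L) : Fin g → K) from rfl,
        hfL _ (φ.symm ⟨y, hy⟩).2]
      simp
  set d : K := (LinearMap.toMatrix' f).det with hd
  have hDA : detSpan A𝔞 = Submodule.span (𝓞 K) {d} * detSpan L := by
    rw [← hmap, detSpan_map]
  have hDA2 : detSpan A𝔞 = ((𝔞 : Submodule (𝓞 K) K)) ^ g * detSpan L :=
    le_antisymm (detSpan_span_aL_le L 𝔞) (le_detSpan_span_aL L 𝔞)
  set 𝔇 : FractionalIdeal (nonZeroDivisors (𝓞 K)) K :=
    ⟨detSpan L, detSpan_isFractional L hfg⟩ with h𝔇def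
  have h𝔇 : 𝔇 ≠ 0 := by
    intro h0
    apply detSpan_ne_bot L hspan
    have := congrArg (fun J : FractionalIdeal (nonZeroDivisors (𝓞 K)) K =>
      (J : Submodule (𝓞 K) K)) h0
    simp at this; exact this
  have hEq : 𝔞 ^ g * 𝔇 = FractionalIdeal.spanSingleton (nonZeroDivisors (𝓞 K)) d * 𝔇 := by
    apply FractionalIdeal.coeToSubmodule_injective
    show ((𝔞 ^ g * 𝔇 : FractionalIdeal (nonZeroDivisors (𝓞 K)) K) : Submodule (𝓞 K) K)
      = ((FractionalIdeal.spanSingleton (nonZeroDivisors (𝓞 K)) d * 𝔇 :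
          FractionalIdeal (nonZeroDivisors (𝓞 K)) K) : Submodule (𝓞 K) K)
    rw [FractionalIdeal.coe_mul, FractionalIdeal.coe_mul, FractionalIdeal.coe_pow,
      FractionalIdeal.coe_spanSingleton]
    show ((𝔞 : Submodule (𝓞 K) K)) ^ g * detSpan L = Submodule.span (𝓞 K) {d} * detSpan L
    rw [← hDA2, hDA]
  have hcancel : 𝔞 ^ g = FractionalIdeal.spanSingleton (nonZeroDivisors (𝓞 K)) d :=
    mul_right_cancel₀ h𝔇 hEq
  have hco : ((I ^ g : Ideal (𝓞 K)) : FractionalIdeal (nonZeroDivisors (𝓞 K)) K)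
      = FractionalIdeal.spanSingleton (nonZeroDivisors (𝓞 K)) d := by
    rw [FractionalIdeal.coeIdeal_pow]
    exact hcancel
  have hdmem : d ∈ ((I ^ g : Ideal (𝓞 K)) : FractionalIdeal (nonZeroDivisors (𝓞 K)) K) := by
    rw [hco]
    exact FractionalIdeal.mem_spanSingleton_self _ d
  obtain ⟨x, hxI, hxd⟩ := (FractionalIdeal.mem_coeIdeal _).mp hdmem
  have hIg : I ^ g = Ideal.span {x} := by
    apply FractionalIdeal.coeIdeal_injective (K := K)
    show ((I ^ g : Ideal (𝓞 K)) : FractionalIdeal (nonZeroDivisors (𝓞 K)) K)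
      = ((Ideal.span {x} : Ideal (𝓞 K)) : FractionalIdeal (nonZeroDivisors (𝓞 K)) K)
    rw [FractionalIdeal.coeIdeal_span_singleton, hxd, hco]
  rw [← map_pow]
  rw [show (⟨I, hI⟩ : nonZeroDivisors (Ideal (𝓞 K))) ^ g = ⟨I ^ g, pow_mem hI g⟩ from rfl,
    ClassGroup.mk0_eq_one_iff]
  exact ⟨⟨x, hIg⟩⟩
end
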